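/- arXiv:2009.08222 — 2 statements merged into one kernel-verified Lean document; each statement's English description precedes it below -/
import Mathlib

section
/- A(F_m) is asymptotic to c·F_m^λ as m → ∞, where c = (√5)^λ/6; that is, lim_{m→∞} A(F_m)/F_m^λ = (√5)^λ/6. -/
/-!
Writing the Fibonacci numbers as `F_{k+2}`, `k ≥ 0`, turns `A(F_{n+2})` into the number of sets
`T ⊆ {0, …, n}` with `∑_{k ∈ T} F_{k+2} ≤ F_{n+2}`. Splitting off the two largest indices gives
`A(F_{m+2}) = A(F_m) + 2^(m-1) + 1`: the largest index forces `T` to be a singleton, the next one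
leaves the budget `F_m`, and without both every subset fits since `∑_{k<n} F_{k+2} = F_{n+3} - 2`.
Hence `6 A(F_m) = 2^m + O(m)`. By Binet's formula `F_m ~ φ^m / √5`, and `φ^λ = 2`, so
`F_m^λ ~ 2^m / √5^λ`.
-/

open scoped BigOperators
open Filter Topology

/-- A natural number is a Fibonacci number, i.e. equals `F m` for some `m ≥ 1`
(with `F 1 = F 2 = 1`). -/
def IsFibNum (x : ℕ) : Prop := ∃ m : ℕ, 0 < m ∧ Nat.fib m = x

/-- `R n` counts the partitions of `n` into distinct Fibonacci numbers:
the number of finite sets of Fibonacci numbers with sum `n` (so `R 0 = 1`). -/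
noncomputable def R (n : ℕ) : ℕ :=
  Nat.card {S : Finset ℕ // (∀ x ∈ S, IsFibNum x) ∧ (∑ x ∈ S, x) = n}

/-- The summatory function `A H = ∑_{n=0}^{H} R n`. -/
noncomputable def A (H : ℕ) : ℕ := ∑ n ∈ Finset.range (H + 1), R n

open Finset

def subsetSumCount (w : ℕ → ℕ) (n b : ℕ) : ℕ :=
  #{T ∈ (range n).powerset | ∑ k ∈ T, w k ≤ b}

section SubsetSumCount

variable (w : ℕ → ℕ)

theorem subsetSumCount_succ_add (n b : ℕ) :
    subsetSumCount w (n + 1) (b + w n) = subsetSumCount w n (b + w n) + subsetSumCount w n b := by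
  have hn : n ∉ range n := by simp
  simp only [subsetSumCount, card_filter, range_add_one, sum_powerset_insert hn]
  congr 1
  refine sum_congr rfl fun T hT => ?_
  have hnT : n ∉ T := fun h => hn (mem_powerset.1 hT h)
  simp only [sum_insert hnT, add_comm (w n), add_le_add_iff_right]

theorem subsetSumCount_zero_right {w : ℕ → ℕ} (hw : ∀ k, 0 < w k) (n : ℕ) :
    subsetSumCount w n 0 = 1 := by
  rw [subsetSumCount, card_eq_one]
  refine ⟨∅, eq_singleton_iff_unique_mem.2 ⟨by simp, fun T hT => ?_⟩⟩
  simp only [mem_filter, nonpos_iff_eq_zero, sum_eq_zero_iff] at hT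
  exact eq_empty_of_forall_notMem fun k hk => (hw k).ne' (hT.2 k hk)

theorem subsetSumCount_of_sum_range_le {n b : ℕ} (h : ∑ k ∈ range n, w k ≤ b) :
    subsetSumCount w n b = 2 ^ n := by
  rw [subsetSumCount, filter_true_of_mem, card_powerset, card_range]
  exact fun T hT => (sum_le_sum_of_subset (mem_powerset.1 hT)).trans h

end SubsetSumCount

theorem Nat.sum_range_fib_add_two (n : ℕ) :
    ∑ k ∈ range n, Nat.fib (k + 2) + 2 = Nat.fib (n + 3) := by
  induction n with
  | zero => rfl
  | succ n ih => rw [sum_range_succ, add_right_comm, ih, Nat.fib_add_two (n := n + 2), add_comm]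

theorem subsetSumCount_fib_add_two (n : ℕ) :
    subsetSumCount (fun k => Nat.fib (k + 2)) (n + 2) (Nat.fib (n + 3)) =
      subsetSumCount (fun k => Nat.fib (k + 2)) n (Nat.fib (n + 1)) + 2 ^ n + 1 := by
  set w : ℕ → ℕ := fun k => Nat.fib (k + 2)
  have hpos : ∀ k, 0 < w k := fun k => Nat.fib_pos.2 (by omega)
  have hfib : Nat.fib (n + 1) + w n = Nat.fib (n + 3) := Nat.fib_add_two.symm
  have hlast : subsetSumCount w (n + 2) (Nat.fib (n + 3)) =
      subsetSumCount w (n + 1) (Nat.fib (n + 3)) + 1 := by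
    simpa [subsetSumCount_zero_right hpos] using subsetSumCount_succ_add w (n + 1) 0
  have hnext : subsetSumCount w (n + 1) (Nat.fib (n + 3)) =
      subsetSumCount w n (Nat.fib (n + 3)) + subsetSumCount w n (Nat.fib (n + 1)) := by
    simpa only [hfib] using subsetSumCount_succ_add w n (Nat.fib (n + 1))
  have hall : subsetSumCount w n (Nat.fib (n + 3)) = 2 ^ n :=
    subsetSumCount_of_sum_range_le w (Nat.sum_range_fib_add_two n ▸ Nat.le_add_right _ _)
  omega

theorem six_mul_subsetSumCount_fib (n : ℕ) :
    6 * subsetSumCount (fun k => Nat.fib (k + 2)) (n + 1) (Nat.fib (n + 2)) + n % 2 =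
      2 ^ (n + 2) + 3 * n + 8 := by
  induction n using Nat.twoStepInduction with
  | zero => decide
  | one => decide
  | more n ih _ =>
    have h := subsetSumCount_fib_add_two (n + 1)
    ring_nf at h ih ⊢
    omega

theorem isFibNum_iff_mem_range (x : ℕ) :
    IsFibNum x ↔ x ∈ Set.range fun k => Nat.fib (k + 2) := by
  constructor
  · rintro ⟨_ | _ | k, hm, rfl⟩
    · exact absurd hm (lt_irrefl 0)
    · exact ⟨0, rfl⟩
    · exact ⟨k, rfl⟩
  · rintro ⟨k, rfl⟩
    exact ⟨k + 2, by omega, rfl⟩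

-- `k ↦ F_{k+2}` enumerates the Fibonacci numbers without repetition (`F_1 = F_2`).
theorem R_eq_natCard (n : ℕ) :
    R n = Nat.card {T : Finset ℕ // ∑ k ∈ T, Nat.fib (k + 2) = n} := by
  classical
  have hinj : Function.Injective fun k => Nat.fib (k + 2) := Nat.fib_add_two_strictMono.injective
  symm
  refine Nat.card_eq_of_bijective (fun T => ⟨T.1.image fun k => Nat.fib (k + 2), fun x hx => ?_,
    by rw [sum_image hinj.injOn, T.2]⟩) ⟨?_, ?_⟩
  · obtain ⟨k, -, rfl⟩ := mem_image.1 hx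
    exact (isFibNum_iff_mem_range _).2 ⟨k, rfl⟩
  · exact fun T T' h => Subtype.ext (image_injective hinj (congrArg Subtype.val h))
  · rintro ⟨S, hfib, hsum⟩
    have hS : ↑S ⊆ (fun k => Nat.fib (k + 2)) '' Set.univ := by
      rw [Set.image_univ]; exact fun x hx => (isFibNum_iff_mem_range x).1 (hfib x hx)
    obtain ⟨T, -, rfl⟩ := subset_set_image_iff.1 hS
    exact ⟨⟨T, by rwa [sum_image hinj.injOn] at hsum⟩, rfl⟩

theorem subset_range_of_sum_fib_le {T : Finset ℕ} {n : ℕ}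
    (h : ∑ k ∈ T, Nat.fib (k + 2) ≤ Nat.fib (n + 2)) : T ⊆ range (n + 1) := fun k hk => by
  have := (single_le_sum (fun _ _ => Nat.zero_le _) hk).trans h
  rw [mem_range, Nat.lt_succ_iff]
  exact Nat.fib_add_two_strictMono.le_iff_le.1 this

theorem A_fib_eq_subsetSumCount (n : ℕ) :
    A (Nat.fib (n + 2)) = subsetSumCount (fun k => Nat.fib (k + 2)) (n + 1) (Nat.fib (n + 2)) := by
  set U := (range (n + 1)).powerset
  have hfiber : ∀ j ∈ range (Nat.fib (n + 2) + 1),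
      R j = #{T ∈ {T ∈ U | ∑ k ∈ T, Nat.fib (k + 2) ≤ Nat.fib (n + 2)} |
        ∑ k ∈ T, Nat.fib (k + 2) = j} := by
    intro j hj
    rw [R_eq_natCard, filter_filter]
    refine Nat.subtype_card _ fun T => ?_
    simp only [mem_filter, mem_powerset, U]
    constructor
    · exact fun h => h.2.2
    · rintro rfl
      have hle : ∑ k ∈ T, Nat.fib (k + 2) ≤ Nat.fib (n + 2) := Nat.lt_succ_iff.1 (mem_range.1 hj)
      exact ⟨subset_range_of_sum_fib_le hle, hle, rfl⟩
  rw [A, sum_congr rfl hfiber, subsetSumCount,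
    card_eq_sum_card_fiberwise (f := fun T => ∑ k ∈ T, Nat.fib (k + 2))]
  intro T hT
  exact mem_range.2 (Nat.lt_succ_iff.2 (mem_filter.1 hT).2)

theorem six_mul_A_fib (n : ℕ) :
    6 * A (Nat.fib (n + 2)) + n % 2 = 2 ^ (n + 2) + 3 * n + 8 := by
  rw [A_fib_eq_subsetSumCount, six_mul_subsetSumCount_fib]

theorem tendsto_A_fib_div_two_pow :
    Tendsto (fun m => (A (Nat.fib m) : ℝ) / 2 ^ m) atTop (𝓝 (1 / 6)) := by
  rw [← tendsto_add_atTop_iff_nat 2]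
  have hlin := tendsto_pow_const_div_const_pow_of_one_lt 1 one_lt_two
  have hconst := tendsto_pow_const_div_const_pow_of_one_lt 0 one_lt_two
  have hupper := (hlin.add hconst).const_add (1 / 6)
  rw [add_zero, add_zero] at hupper
  refine tendsto_of_tendsto_of_tendsto_of_le_of_le tendsto_const_nhds hupper (fun n => ?_) fun n => ?_
  all_goals
    have h : (6 * A (Nat.fib (n + 2)) + (n % 2 : ℕ) : ℝ) = 2 ^ (n + 2) + 3 * n + 8 := by
      exact_mod_cast six_mul_A_fib n
    have hmod : ((n % 2 : ℕ) : ℝ) ≤ 1 := by exact_mod_cast Nat.le_of_lt_succ (Nat.mod_lt n two_pos)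
    simp only [pow_add, pow_one, pow_zero] at h ⊢
    field_simp
    nlinarith [pow_pos (two_pos : (0 : ℝ) < 2) n]

open Real in
theorem tendsto_fib_div_goldenRatio_pow :
    Tendsto (fun m => (Nat.fib m : ℝ) / goldenRatio ^ m) atTop (𝓝 (1 / √5)) := by
  have hratio := tendsto_pow_atTop_nhds_zero_of_abs_lt_one (r := goldenConj / goldenRatio) <| by
    rw [abs_div, abs_of_pos goldenRatio_pos, div_lt_one goldenRatio_pos, abs_lt]
    constructor <;> linarith [neg_one_lt_goldenConj, goldenConj_neg, one_lt_goldenRatio]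
  have hbinet (m : ℕ) :
      (Nat.fib m : ℝ) / goldenRatio ^ m = (1 - (goldenConj / goldenRatio) ^ m) / √5 := by
    rw [div_pow goldenConj, one_sub_div (pow_ne_zero _ goldenRatio_pos.ne'), coe_fib_eq]
    ring
  simpa [hbinet] using (hratio.const_sub 1).div_const √5

/-- `A(F_m) ~ c F_m^λ` with `c = (√5)^λ / 6`. -/
theorem summatory_at_fib_asymptotic_power (φ lam : ℝ)
    (hφ : φ = (1 + Real.sqrt 5) / 2)
    (hlam : lam = Real.log 2 / Real.log φ) :
    Tendsto (fun m : ℕ => (A (Nat.fib m) : ℝ) / (Nat.fib m : ℝ) ^ lam) atTop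
      (𝓝 (Real.sqrt 5 ^ lam / 6)) := by
  obtain rfl : φ = Real.goldenRatio := hφ
  have hpow : Real.goldenRatio ^ lam = 2 := by
    rw [hlam, Real.log_div_log, Real.rpow_logb Real.goldenRatio_pos
      Real.one_lt_goldenRatio.ne' two_pos]
  have hfib (m : ℕ) : (Nat.fib m : ℝ) ^ lam =
      ((Nat.fib m : ℝ) / Real.goldenRatio ^ m) ^ lam * 2 ^ m := by
    have hφm : (Real.goldenRatio ^ m) ^ lam = 2 ^ m := by
      rw [← Real.rpow_natCast_mul Real.goldenRatio_pos.le, mul_comm,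
        Real.rpow_mul_natCast Real.goldenRatio_pos.le, hpow]
    rw [← hφm, ← Real.mul_rpow (by positivity) (by positivity), div_mul_cancel₀ _ (by positivity)]
  have hsqrt5 : (0 : ℝ) < Real.sqrt 5 := by positivity
  have hlim := tendsto_A_fib_div_two_pow.div
    (tendsto_fib_div_goldenRatio_pow.rpow_const (p := lam) (Or.inl (by positivity)))
    (by positivity)
  have hval : 1 / 6 / (1 / Real.sqrt 5) ^ lam = Real.sqrt 5 ^ lam / 6 := by
    rw [Real.div_rpow zero_le_one hsqrt5.le, Real.one_rpow]
    field_simp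
  refine (hval ▸ hlim).congr fun m => ?_
  rw [Pi.div_apply, hfib, div_div, mul_comm]
end

section
/- Let H be a positive integer with Zeckendorf expansion H = F_{m_0} + F_{m_1} + ... + F_{m_k}. If k ≥ 1, then A(H) = a_k·⌊2^{m_k}/6 + (m_k + 1)/2⌋ − ε_k·a_{k−1} + Σ_{i=1}^{k} a_{i−1}·f(t_i)·2^{m_{i−1} − 2t_i}; if k = 0, then A(H) = ⌊2^{m_0}/6 + (m_0 + 1)/2⌋. -/
/-!
For `n < F (j + 1)` the sets of distinct Fibonacci numbers with sum `n` are the images under `F`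
of the subsets of `[2, j]` with Fibonacci sum `n`, so `A h` counts the subsets of `[2, j]` of
Fibonacci sum at most `h`. Splitting off the index `j + 2` and complementing in `[2, j + 1]`, whose
sum is `F (j + 3) - 2`, gives the reflection identity `A (F (j + 2) + z) + A w = 2 ^ j + A z` for
`z + w + 3 = F (j + 1)`, with `A` extended by `0` to negative integers. Applied two or three times
it gives `A (F (i + 4) + z) = 2 ^ (i + 1) + A (F (i + 2) + z) + A z` for `0 ≤ z < F (i + 1)`, hence
the values `A (F n)` and, by induction on the gap `m_{i-1} - m_i` in steps of two, the three-term
recurrence `A x_{i-1} = f(t_i) 2^{m_{i-1} - 2t_i} + t_i A x_i - ε_i A x_{i+1}`. Unrolling it from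
`x_0 = H` produces the continuants `a_l`.
-/

open scoped BigOperators
open Filter Topology

/-- `f t = 1 + 2(4^{t-1} - 1)/3` (an integer for `t ≥ 1`). -/
def fInt (t : ℕ) : ℤ := 1 + 2 * (4 ^ (t - 1) - 1) / 3

open Finset
open Nat (fib)

lemma sum_Icc_eq_add_sum_Icc_add_one {M : Type*} [AddCommMonoid M] {f : ℕ → M} {l k : ℕ}
    (hl : l ≤ k) : ∑ i ∈ Icc l k, f i = f l + ∑ i ∈ Icc (l + 1) k, f i := by
  rw [← insert_Icc_add_one_left_eq_Icc hl, sum_insert (by simp)]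

lemma eq_continuant_mul_sub_add_sum {α : Type*} [CommRing α] {k : ℕ} {u c t ε a : ℕ → α}
    (hu : ∀ i, 1 ≤ i → i ≤ k → u (i - 1) = c i + t i * u i - ε i * u (i + 1))
    (ha0 : a 0 = 1) (ha1 : a 1 = t 1)
    (ha : ∀ l, 1 ≤ l → l ≤ k - 1 → a (l + 1) = t (l + 1) * a l - ε l * a (l - 1)) :
    ∀ l, 1 ≤ l → l ≤ k →
      u 0 = a l * u l - ε l * a (l - 1) * u (l + 1) + ∑ i ∈ Icc 1 l, a (i - 1) * c i := by
  intro l hl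
  induction l, hl using Nat.le_induction with
  | base =>
    intro hk
    rw [hu 1 le_rfl hk, Icc_self, sum_singleton, Nat.sub_self, ha0, ha1]
    ring
  | succ l hl ih =>
    intro hlk
    have hstep := hu (l + 1) (by omega) hlk
    rw [Nat.add_sub_cancel] at hstep
    rw [ih (by omega), hstep, sum_Icc_succ_top (by omega), Nat.add_sub_cancel, ha l hl (by omega)]
    ring

lemma fib_injOn_Ici_two : Set.InjOn fib (Set.Ici 2) := Nat.fib_strictMonoOn.injOn

lemma fib_add_two_cast (n : ℕ) : (fib (n + 2) : ℤ) = fib n + fib (n + 1) := by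
  exact_mod_cast Nat.fib_add_two

lemma fib_cast_mono {m n : ℕ} (h : m ≤ n) : (fib m : ℤ) ≤ fib n := by
  exact_mod_cast Nat.fib_mono h

lemma fib_add_two_add_lt_fib {μ n : ℕ} (hn : μ + 3 ≤ n) {y : ℤ} (hy : y < fib (μ + 1)) :
    fib (μ + 2) + y < fib n := by
  have f3 : (fib (μ + 3) : ℤ) = fib (μ + 1) + fib (μ + 2) := fib_add_two_cast _
  linarith [fib_cast_mono hn]

lemma sum_Icc_two_fib_add_two (j : ℕ) : ∑ i ∈ Icc 2 (j + 1), (fib i : ℤ) + 2 = fib (j + 3) := by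
  induction j with
  | zero => rfl
  | succ j ih =>
    rw [sum_Icc_succ_top (by omega), Nat.fib_add_two (n := j + 2)]
    push_cast
    linarith

lemma sum_Icc_fib_lt_fib_sub_one {k : ℕ} {m : ℕ → ℕ}
    (hgap : ∀ i : ℕ, 1 ≤ i → i ≤ k → m i + 2 ≤ m (i - 1)) (hmk : 2 ≤ m k) {l : ℕ} (hl : l ≤ k) :
    ∑ i ∈ Icc (l + 1) k, fib (m i) < fib (m l - 1) := by
  induction hl using Nat.decreasingInduction with
  | self => rw [Icc_eq_empty (by omega), sum_empty]; exact Nat.fib_pos.2 (by omega)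
  | of_succ l hlk ih =>
    have hg := hgap (l + 1) (by omega) hlk
    rw [Nat.add_sub_cancel] at hg
    have hpos : m (l + 1) ≠ 0 := fun h => by simp [h] at ih
    rw [sum_Icc_eq_add_sum_Icc_add_one hlk]
    calc fib (m (l + 1)) + ∑ i ∈ Icc (l + 1 + 1) k, fib (m i)
        < fib (m (l + 1) - 1) + fib (m (l + 1)) := by omega
      _ = fib (m (l + 1) + 1) := (Nat.fib_add_one hpos).symm
      _ ≤ fib (m l - 1) := Nat.fib_mono (by omega)

lemma exists_mem_Icc_fib_eq {x j : ℕ} (hx : IsFibNum x) (hlt : x < fib (j + 1)) :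
    ∃ i ∈ Icc 2 j, fib i = x := by
  obtain ⟨n, hn, rfl⟩ := hx
  obtain ⟨i, hi, he⟩ : ∃ i, 2 ≤ i ∧ fib i = fib n :=
    if h : n = 1 then ⟨2, le_rfl, by rw [h]; rfl⟩ else ⟨n, by omega, rfl⟩
  rw [← he, Nat.fib_lt_fib hi] at hlt
  exact ⟨i, mem_Icc.2 ⟨hi, by omega⟩, he⟩

lemma filter_fib_mem_image {j : ℕ} {T : Finset ℕ} (hT : T ⊆ Icc 2 j) :
    (Icc 2 j).filter (fun i => fib i ∈ T.image fib) = T := by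
  ext i
  simp only [mem_filter, mem_image]
  constructor
  · rintro ⟨hi, i', hi', he⟩
    rwa [← fib_injOn_Ici_two (mem_Icc.1 (hT hi')).1 (mem_Icc.1 hi).1 he]
  · exact fun hi => ⟨hT hi, i, hi, rfl⟩

lemma image_fib_filter_fib_mem {j : ℕ} {S : Finset ℕ}
    (hS : ∀ x ∈ S, IsFibNum x ∧ x < fib (j + 1)) :
    ((Icc 2 j).filter (fun i => fib i ∈ S)).image fib = S := by
  ext x
  simp only [mem_image, mem_filter]
  constructor
  · rintro ⟨i, ⟨-, hi⟩, rfl⟩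
    exact hi
  · intro hx
    obtain ⟨i, hi, rfl⟩ := exists_mem_Icc_fib_eq (hS x hx).1 (hS x hx).2
    exact ⟨i, ⟨hi, hx⟩, rfl⟩

lemma sum_image_fib {j : ℕ} {T : Finset ℕ} (hT : T ⊆ Icc 2 j) :
    ∑ x ∈ T.image fib, x = ∑ i ∈ T, fib i :=
  sum_image fun _ hi _ hi' he => fib_injOn_Ici_two (mem_Icc.1 (hT hi)).1 (mem_Icc.1 (hT hi')).1 he

/-- `F 1 = F 2` is the only coincidence among Fibonacci numbers; indexing from `2` removes it. -/
lemma R_eq_card_filter {n j : ℕ} (hn : n < fib (j + 1)) :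
    R n = #((Icc 2 j).powerset.filter (fun T => ∑ i ∈ T, fib i = n)) := by
  set P := (Icc 2 j).powerset.filter (fun T => ∑ i ∈ T, fib i = n)
  have hmem : ∀ S : Finset ℕ,
      ((∀ x ∈ S, IsFibNum x) ∧ ∑ x ∈ S, x = n) ↔ S ∈ P.image (image fib) := by
    intro S
    simp only [P, mem_image, mem_filter, mem_powerset]
    constructor
    · rintro ⟨hfib, hsum⟩
      have hS : ∀ x ∈ S, IsFibNum x ∧ x < fib (j + 1) := fun x hx =>
        ⟨hfib x hx, (hsum ▸ single_le_sum (fun _ _ => Nat.zero_le _) hx).trans_lt hn⟩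
      refine ⟨_, ⟨filter_subset _ _, ?_⟩, image_fib_filter_fib_mem hS⟩
      rw [← sum_image_fib (filter_subset _ _), image_fib_filter_fib_mem hS, hsum]
    · rintro ⟨T, ⟨hT, hsum⟩, rfl⟩
      refine ⟨?_, by rw [sum_image_fib hT, hsum]⟩
      simp only [mem_image]
      rintro _ ⟨i, hi, rfl⟩
      exact ⟨i, by have := (mem_Icc.1 (hT hi)).1; omega, rfl⟩
  have hinj : Set.InjOn (image fib) P := by
    intro T hT T' hT' he
    simp only [P, coe_filter, mem_powerset, Set.mem_ofPred_eq] at hT hT'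
    rw [← filter_fib_mem_image hT.1, ← filter_fib_mem_image hT'.1, he]
  rw [R, Nat.card_congr (Equiv.subtypeEquivRight hmem), Nat.card_eq_finsetCard,
    card_image_of_injOn hinj]

def fibSubsetCount (j : ℕ) (h : ℤ) : ℕ :=
  #((Icc 2 j).powerset.filter (fun T => ∑ i ∈ T, (fib i : ℤ) ≤ h))

lemma A_eq_fibSubsetCount {n j : ℕ} (hn : n < fib (j + 1)) : A n = fibSubsetCount j n := by
  have hR : ∀ k ∈ range (n + 1), R k = #((Icc 2 j).powerset.filter (fun T => ∑ i ∈ T, fib i = k)) :=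
    fun k hk => R_eq_card_filter ((Nat.lt_succ_iff.1 (mem_range.1 hk)).trans_lt hn)
  rw [A, sum_congr rfl hR, fibSubsetCount, card_eq_sum_card_fiberwise (f := fun T => ∑ i ∈ T, fib i)
    (t := range (n + 1)) fun T hT => by
      simp only [coe_filter, Set.mem_ofPred_eq, coe_range, Set.mem_Iio] at hT ⊢
      exact_mod_cast Nat.lt_succ_of_le (by exact_mod_cast hT.2)]
  refine sum_congr rfl fun k hk => ?_
  rw [filter_filter]
  congr 1
  refine filter_congr fun T _ => ⟨fun h => ⟨?_, h⟩, And.right⟩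
  rw [← Nat.cast_sum, h]
  exact_mod_cast Nat.lt_succ_iff.1 (mem_range.1 hk)

lemma fibSubsetCount_of_neg {j : ℕ} {h : ℤ} (hh : h < 0) : fibSubsetCount j h = 0 := by
  rw [fibSubsetCount, card_eq_zero, filter_eq_empty_iff]
  exact fun T _ => (hh.trans_le (sum_nonneg fun i _ => Int.natCast_nonneg _)).not_ge

lemma fibSubsetCount_add_two (j : ℕ) (h : ℤ) :
    fibSubsetCount (j + 2) h =
      fibSubsetCount (j + 1) h + fibSubsetCount (j + 1) (h - fib (j + 2)) := by
  have hnot : j + 2 ∉ Icc 2 (j + 1) := by simp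
  simp only [fibSubsetCount, card_filter]
  rw [show Icc 2 (j + 2) = insert (j + 2) (Icc 2 (j + 1)) from
    (insert_Icc_right_eq_Icc_add_one (by omega)).symm, sum_powerset_insert hnot]
  congr 1
  refine sum_congr rfl fun T hT => ?_
  rw [sum_insert fun h => hnot (mem_powerset.1 hT h)]
  simp only [le_sub_iff_add_le']

lemma fibSubsetCount_add_fibSubsetCount_compl (j : ℕ) (h : ℤ) :
    fibSubsetCount (j + 1) h + fibSubsetCount (j + 1) (fib (j + 3) - 3 - h) = 2 ^ j := by
  set I := Icc 2 (j + 1)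
  have hsum : ∀ T ⊆ I, ∑ i ∈ I \ T, (fib i : ℤ) = fib (j + 3) - 2 - ∑ i ∈ T, (fib i : ℤ) := by
    intro T hT
    linarith [sum_sdiff (f := fun i => (fib i : ℤ)) hT, sum_Icc_two_fib_add_two j]
  have hcompl : fibSubsetCount (j + 1) (fib (j + 3) - 3 - h) =
      #(I.powerset.filter fun T => ¬ ∑ i ∈ T, (fib i : ℤ) ≤ h) := by
    refine card_nbij' (I \ ·) (I \ ·) ?_ ?_ ?_ ?_
    · intro T hT
      simp only [coe_filter, mem_powerset, Set.mem_ofPred_eq] at hT ⊢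
      rw [hsum T hT.1]
      exact ⟨sdiff_subset, by linarith⟩
    · intro T hT
      simp only [coe_filter, mem_powerset, Set.mem_ofPred_eq] at hT ⊢
      rw [hsum T hT.1]
      exact ⟨sdiff_subset, by linarith⟩
    · intro T hT
      exact Finset.sdiff_sdiff_eq_self (mem_powerset.1 (mem_filter.1 hT).1)
    · intro T hT
      exact Finset.sdiff_sdiff_eq_self (mem_powerset.1 (mem_filter.1 hT).1)
  rw [hcompl, fibSubsetCount, card_filter_add_card_filter_not, card_powerset, Nat.card_Icc]
  congr 1

noncomputable def AInt (h : ℤ) : ℤ := if h < 0 then 0 else A h.toNat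

lemma AInt_natCast (n : ℕ) : AInt n = A n := by simp [AInt]

lemma AInt_of_neg {h : ℤ} (hh : h < 0) : AInt h = 0 := if_pos hh

lemma AInt_zero : AInt 0 = 1 := by
  rw [← Nat.cast_zero, AInt_natCast, A_eq_fibSubsetCount (j := 0) (by decide)]
  rfl

lemma AInt_eq_fibSubsetCount {j : ℕ} {h : ℤ} (hh : h < fib (j + 1)) :
    AInt h = fibSubsetCount j h := by
  rcases lt_or_ge h 0 with hneg | hnonneg
  · rw [AInt_of_neg hneg, fibSubsetCount_of_neg hneg, Nat.cast_zero]
  · lift h to ℕ using hnonneg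
    rw [AInt_natCast, A_eq_fibSubsetCount (by exact_mod_cast hh)]

lemma AInt_reflection (j : ℕ) {x z w : ℤ} (hx : x = fib (j + 2) + z) (hzw : z + w + 3 = fib (j + 1))
    (hz : z < fib (j + 1)) (hw : w < fib (j + 2)) : AInt x + AInt w = 2 ^ j + AInt z := by
  have f3 : (fib (j + 3) : ℤ) = fib (j + 1) + fib (j + 2) := fib_add_two_cast _
  have f2 := fib_cast_mono (show j + 1 ≤ j + 2 by omega)
  have hsplit := fibSubsetCount_add_two j x
  have hcompl := fibSubsetCount_add_fibSubsetCount_compl j x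
  rw [show x - fib (j + 2) = z by linarith] at hsplit
  rw [show (fib (j + 3) : ℤ) - 3 - x = w by linarith] at hcompl
  rw [AInt_eq_fibSubsetCount (j := j + 2) (by linarith), AInt_eq_fibSubsetCount (j := j + 1) hw,
    AInt_eq_fibSubsetCount (j := j + 1) (by linarith), hsplit]
  push_cast
  zify at hcompl
  linarith

lemma AInt_fib_add_four (i : ℕ) {z : ℤ} (hz0 : 0 ≤ z) (hz : z < fib (i + 1)) :
    AInt (fib (i + 4) + z) = 2 ^ (i + 1) + AInt (fib (i + 2) + z) + AInt z := by
  have f4 : (fib (i + 4) : ℤ) = fib (i + 2) + fib (i + 3) := fib_add_two_cast _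
  have f3 : (fib (i + 3) : ℤ) = fib (i + 1) + fib (i + 2) := fib_add_two_cast _
  have f2 := fib_add_two_cast i
  have f0 := Int.natCast_nonneg (fib i)
  have r1 := AInt_reflection (i + 2) (x := fib (i + 4) + z) (w := fib (i + 3) - 3 - z) rfl
    (show _ = (fib (i + 3) : ℤ) by ring) (show z < fib (i + 3) by linarith)
    (show _ < (fib (i + 4) : ℤ) by linarith)
  have r2 := AInt_reflection i (x := fib (i + 3) - 3 - z) (z := fib (i + 1) - 3 - z) (w := z)
    (by linarith) (by ring) (by linarith) (by linarith)
  have r3 := AInt_reflection i (x := fib (i + 2) + z) (w := fib (i + 1) - 3 - z) rfl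
    (by ring) hz (by linarith)
  linear_combination r1 - r2 - r3

lemma AInt_fib_add_two_of_le_one (j : ℕ) (hj : j ≤ 1) : AInt (fib (j + 2)) = 2 ^ j + 1 := by
  have r := AInt_reflection j (x := fib (j + 2)) (z := 0) (w := fib (j + 1) - 3) (by ring) (by ring)
    (by exact_mod_cast Nat.fib_pos.2 (Nat.succ_pos j)) (by interval_cases j <;> decide)
  rw [AInt_of_neg (h := fib (j + 1) - 3) (by interval_cases j <;> decide), AInt_zero] at r
  linarith

lemma AInt_fib (n : ℕ) (hn : 2 ≤ n) : AInt (fib n) = ⌊(2 ^ n : ℚ) / 6 + ((n : ℚ) + 1) / 2⌋ := by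
  obtain ⟨i, rfl⟩ : ∃ i, n = i + 2 := ⟨n - 2, by omega⟩
  induction i using Nat.twoStepInduction with
  | zero => rw [AInt_fib_add_two_of_le_one 0 zero_le_one]; norm_num [Int.floor_eq_iff]
  | one => rw [AInt_fib_add_two_of_le_one 1 le_rfl]; norm_num [Int.floor_eq_iff]
  | more i ih _ =>
    have hrec := AInt_fib_add_four i le_rfl (by exact_mod_cast Nat.fib_pos.2 (Nat.succ_pos i))
    rw [add_zero, add_zero, AInt_zero] at hrec
    have hq : (2 ^ (i + 2 + 2) : ℚ) / 6 + (((i + 2 + 2 : ℕ) : ℚ) + 1) / 2 =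
        (2 ^ (i + 2) : ℚ) / 6 + (((i + 2 : ℕ) : ℚ) + 1) / 2 + ((2 ^ (i + 1) + 1 : ℤ) : ℚ) := by
      push_cast; ring
    rw [hq, Int.floor_add_intCast, ← ih (by omega), hrec]
    ring

lemma fInt_two : fInt 2 = 3 := by decide

lemma fInt_add_two (t : ℕ) : fInt (t + 2) = fInt (t + 1) + 2 ^ (2 * t + 1) := by
  have h4 : (2 : ℤ) ^ (2 * t + 1) = 2 * 4 ^ t := by rw [pow_succ, pow_mul]; ring
  have h : (2 : ℤ) * (4 ^ (t + 1) - 1) = 2 * (4 ^ t - 1) + 2 ^ (2 * t + 1) * 3 := by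
    rw [h4]; ring
  show 1 + 2 * (4 ^ (t + 1) - 1) / 3 = 1 + 2 * (4 ^ t - 1) / 3 + (2 : ℤ) ^ (2 * t + 1)
  rw [h, Int.add_mul_ediv_right _ _ (by norm_num)]
  ring

lemma AInt_fib_add_four_add_fib_add (μ : ℕ) {y : ℤ} (hy0 : 0 ≤ y) (hy : y < fib (μ + 1)) :
    AInt (fib (μ + 4) + (fib (μ + 2) + y)) = 3 * 2 ^ μ + 2 * AInt (fib (μ + 2) + y) - AInt y := by
  have f4 : (fib (μ + 4) : ℤ) = fib (μ + 2) + fib (μ + 3) := fib_add_two_cast _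
  have f3 : (fib (μ + 3) : ℤ) = fib (μ + 1) + fib (μ + 2) := fib_add_two_cast _
  have f2 := fib_add_two_cast μ
  have f0 := Int.natCast_nonneg (fib μ)
  have r1 := AInt_reflection (μ + 2) (x := fib (μ + 4) + (fib (μ + 2) + y))
    (w := fib (μ + 1) - 3 - y) rfl (show _ = (fib (μ + 3) : ℤ) by linarith)
    (show _ < (fib (μ + 3) : ℤ) by linarith) (show _ < (fib (μ + 4) : ℤ) by linarith)
  have r2 := AInt_reflection μ (x := fib (μ + 2) + y) (w := fib (μ + 1) - 3 - y) rfl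
    (by ring) hy (by linarith)
  linear_combination r1 - r2

lemma AInt_fib_add_five_add_fib_add (μ : ℕ) {y : ℤ} (hy0 : 0 ≤ y) (hy : y < fib (μ + 1)) :
    AInt (fib (μ + 5) + (fib (μ + 2) + y)) = 3 * 2 ^ (μ + 1) + 2 * AInt (fib (μ + 2) + y) := by
  have f5 : (fib (μ + 5) : ℤ) = fib (μ + 3) + fib (μ + 4) := fib_add_two_cast _
  have f4 : (fib (μ + 4) : ℤ) = fib (μ + 2) + fib (μ + 3) := fib_add_two_cast _
  have f3 : (fib (μ + 3) : ℤ) = fib (μ + 1) + fib (μ + 2) := fib_add_two_cast _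
  have f2 := fib_add_two_cast μ
  have f0 := Int.natCast_nonneg (fib μ)
  have r1 := AInt_reflection (μ + 3) (x := fib (μ + 5) + (fib (μ + 2) + y))
    (w := fib (μ + 3) - 3 - y) rfl (show _ = (fib (μ + 4) : ℤ) by linarith)
    (show _ < (fib (μ + 4) : ℤ) by linarith) (show _ < (fib (μ + 5) : ℤ) by linarith)
  have r2 := AInt_reflection μ (x := fib (μ + 3) - 3 - y) (z := fib (μ + 1) - 3 - y) (w := y)
    (by linarith) (by ring) (by linarith) (by linarith)
  have r3 := AInt_reflection μ (x := fib (μ + 2) + y) (w := fib (μ + 1) - 3 - y) rfl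
    (by ring) hy (by linarith)
  linear_combination r1 - r2 - r3

lemma AInt_fib_even_gap (μ t : ℕ) (ht : 1 ≤ t) {y : ℤ} (hy0 : 0 ≤ y) (hy : y < fib (μ + 1)) :
    AInt (fib (μ + 2 * t + 2) + (fib (μ + 2) + y)) =
      fInt (t + 1) * 2 ^ μ + (t + 1) * AInt (fib (μ + 2) + y) - AInt y := by
  induction t, ht using Nat.le_induction with
  | base =>
    rw [AInt_fib_add_four_add_fib_add μ hy0 hy, fInt_two]
    ring
  | succ t ht ih =>
    have hX := fib_add_two_add_lt_fib (show μ + 3 ≤ μ + 2 * t + 1 by omega) hy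
    rw [show μ + 2 * (t + 1) + 2 = μ + 2 * t + 4 by ring,
      AInt_fib_add_four (μ + 2 * t) (by positivity) hX, ih, fInt_add_two]
    push_cast
    ring

lemma AInt_fib_odd_gap (μ t : ℕ) (ht : 1 ≤ t) {y : ℤ} (hy0 : 0 ≤ y) (hy : y < fib (μ + 1)) :
    AInt (fib (μ + 2 * t + 3) + (fib (μ + 2) + y)) =
      fInt (t + 1) * 2 ^ (μ + 1) + (t + 1) * AInt (fib (μ + 2) + y) := by
  induction t, ht using Nat.le_induction with
  | base =>
    rw [AInt_fib_add_five_add_fib_add μ hy0 hy, fInt_two]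
    ring
  | succ t ht ih =>
    have hX := fib_add_two_add_lt_fib (show μ + 3 ≤ μ + 2 * t + 1 + 1 by omega) hy
    rw [show μ + 2 * (t + 1) + 3 = μ + 2 * t + 1 + 4 by ring,
      AInt_fib_add_four (μ + 2 * t + 1) (by positivity) hX, ih, fInt_add_two]
    push_cast
    ring

lemma AInt_fib_add_fib_add {n m t : ℕ} {ε y : ℤ} (hm : 2 ≤ m) (hmn : m + 2 ≤ n)
    (ht : t = (n - m + 2) / 2) (hε : ε = 2 * (t : ℤ) - 1 - n + m) (hy0 : 0 ≤ y)
    (hy : y < fib (m - 1)) :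
    AInt (fib n + (fib m + y)) = fInt t * 2 ^ (n - 2 * t) + t * AInt (fib m + y) - ε * AInt y := by
  obtain ⟨μ, rfl⟩ : ∃ μ, m = μ + 2 := ⟨m - 2, by omega⟩
  rw [show μ + 2 - 1 = μ + 1 from rfl] at hy
  subst hε
  obtain ⟨s, hs | hs⟩ := Nat.even_or_odd' (n - μ - 2)
  · obtain rfl : n = μ + 2 * s + 2 := by omega
    obtain rfl : t = s + 1 := by omega
    rw [AInt_fib_even_gap μ s (by omega) hy0 hy, show μ + 2 * s + 2 - 2 * (s + 1) = μ by omega]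
    push_cast
    ring
  · obtain rfl : n = μ + 2 * s + 3 := by omega
    obtain rfl : t = s + 1 := by omega
    rw [AInt_fib_odd_gap μ s (by omega) hy0 hy, show μ + 2 * s + 3 - 2 * (s + 1) = μ + 1 by omega]
    push_cast
    ring

lemma AInt_sum_Icc_fib_recurrence {k : ℕ} {m : ℕ → ℕ}
    (hgap : ∀ i : ℕ, 1 ≤ i → i ≤ k → m i + 2 ≤ m (i - 1)) (hmk : 2 ≤ m k) {i t : ℕ} {ε : ℤ}
    (hi : 1 ≤ i) (hik : i ≤ k) (ht : t = (m (i - 1) - m i + 2) / 2)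
    (hε : ε = 2 * (t : ℤ) - 1 - (m (i - 1) : ℤ) + (m i : ℤ)) :
    AInt (∑ j ∈ Icc (i - 1) k, fib (m j) : ℕ) = fInt t * 2 ^ (m (i - 1) - 2 * t) +
      t * AInt (∑ j ∈ Icc i k, fib (m j) : ℕ) - ε * AInt (∑ j ∈ Icc (i + 1) k, fib (m j) : ℕ) := by
  have hmi : 2 ≤ m i := by
    rcases hik.lt_or_eq with hlt | rfl
    · have := hgap (i + 1) (by omega) hlt
      rw [Nat.add_sub_cancel] at this
      omega
    · exact hmk
  rw [sum_Icc_eq_add_sum_Icc_add_one (by omega : i - 1 ≤ k), Nat.sub_add_cancel hi,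
    sum_Icc_eq_add_sum_Icc_add_one hik]
  push_cast
  exact AInt_fib_add_fib_add hmi (hgap i hi hik) ht hε (by positivity)
    (by exact_mod_cast sum_Icc_fib_lt_fib_sub_one hgap hmk hik)

theorem summatory_exact_formula_general
    (H k : ℕ) (m x t : ℕ → ℕ) (ε a : ℕ → ℤ)
    (hexp : H = ∑ i ∈ Finset.range (k + 1), Nat.fib (m i))
    (hgap : ∀ i : ℕ, 1 ≤ i → i ≤ k → m i + 2 ≤ m (i - 1))
    (hmk : 2 ≤ m k)
    (hx : ∀ l : ℕ, l ≤ k + 1 → x l = ∑ i ∈ Finset.Icc l k, Nat.fib (m i))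
    (ht : ∀ i : ℕ, 1 ≤ i → i ≤ k → t i = (m (i - 1) - m i + 2) / 2)
    (hε : ∀ i : ℕ, 1 ≤ i → i ≤ k →
      ε i = 2 * (t i : ℤ) - 1 - (m (i - 1) : ℤ) + (m i : ℤ))
    (ha0 : a 0 = 1)
    (ha1 : 1 ≤ k → a 1 = (t 1 : ℤ))
    (ha : ∀ l : ℕ, 1 ≤ l → l ≤ k - 1 →
      a (l + 1) = (t (l + 1) : ℤ) * a l - ε l * a (l - 1)) :
    (1 ≤ k →
      (A H : ℤ) = a k * ⌊(2 ^ m k : ℚ) / 6 + ((m k : ℚ) + 1) / 2⌋ - ε k * a (k - 1)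
        + ∑ i ∈ Finset.Icc 1 k, a (i - 1) * fInt (t i) * 2 ^ (m (i - 1) - 2 * t i)) ∧
    (k = 0 → (A H : ℤ) = ⌊(2 ^ m 0 : ℚ) / 6 + ((m 0 : ℚ) + 1) / 2⌋) := by
  have hstep : ∀ i, 1 ≤ i → i ≤ k → AInt (x (i - 1)) =
      fInt (t i) * 2 ^ (m (i - 1) - 2 * t i) + t i * AInt (x i) - ε i * AInt (x (i + 1)) :=
    fun i hi hik => by
      rw [hx _ (by omega), hx _ (by omega), hx _ (by omega)]
      exact AInt_sum_Icc_fib_recurrence hgap hmk hi hik (ht i hi hik) (hε i hi hik)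
  refine ⟨fun hk => ?_, fun hk => ?_⟩
  · have hH : H = x 0 := by rw [hexp, hx 0 (by omega), range_eq_Ico, Ico_add_one_right_eq_Icc]
    have hxk : x k = fib (m k) := by rw [hx k (by omega), Icc_self, sum_singleton]
    have hx_last : x (k + 1) = 0 := by rw [hx _ le_rfl, Icc_eq_empty (by omega), sum_empty]
    rw [← AInt_natCast, hH, eq_continuant_mul_sub_add_sum (u := fun l => AInt (x l))
      (c := fun i => fInt (t i) * 2 ^ (m (i - 1) - 2 * t i)) (t := fun i => (t i : ℤ)) hstep ha0
      (ha1 hk) ha k hk le_rfl, hxk, hx_last, AInt_fib _ hmk, Nat.cast_zero, AInt_zero, mul_one]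
    simp only [mul_assoc]
  · subst hk
    rw [← AInt_natCast, hexp, sum_range_one, AInt_fib _ hmk]

/-- Theorem 1.2: exact formula for the summatory function `A(H)`. -/
theorem summatory_exact_formula
    (H k : ℕ) (m x t : ℕ → ℕ) (ε a : ℕ → ℤ)
    (hH : 0 < H)
    (hexp : H = ∑ i ∈ Finset.range (k + 1), Nat.fib (m i))
    (hgap : ∀ i : ℕ, 1 ≤ i → i ≤ k → m i + 2 ≤ m (i - 1))
    (hmk : 2 ≤ m k)
    (hx : ∀ l : ℕ, l ≤ k + 1 → x l = ∑ i ∈ Finset.Icc l k, Nat.fib (m i))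
    (ht : ∀ i : ℕ, 1 ≤ i → i ≤ k → t i = (m (i - 1) - m i + 2) / 2)
    (hε : ∀ i : ℕ, 1 ≤ i → i ≤ k →
      ε i = 2 * (t i : ℤ) - 1 - (m (i - 1) : ℤ) + (m i : ℤ))
    (ha0 : a 0 = 1)
    (ha1 : 1 ≤ k → a 1 = (t 1 : ℤ))
    (ha : ∀ l : ℕ, 1 ≤ l → l ≤ k - 1 →
      a (l + 1) = (t (l + 1) : ℤ) * a l - ε l * a (l - 1)) :
    (1 ≤ k →
      (A H : ℤ) = a k * ⌊(2 ^ m k : ℚ) / 6 + ((m k : ℚ) + 1) / 2⌋ - ε k * a (k - 1)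
        + ∑ i ∈ Finset.Icc 1 k, a (i - 1) * fInt (t i) * 2 ^ (m (i - 1) - 2 * t i)) ∧
    (k = 0 → (A H : ℤ) = ⌊(2 ^ m 0 : ℚ) / 6 + ((m 0 : ℚ) + 1) / 2⌋) :=
  summatory_exact_formula_general H k m x t ε a hexp hgap hmk hx ht hε ha0 ha1 ha
end
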